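/- arXiv:2211.12793 — 4 statements merged into one kernel-verified Lean document; each statement's English description precedes it below -/
import Mathlib

section
/- For every quaternion matrix A ∈ ℍ^{M×N} there exist a quaternion matrix Q ∈ ℍ^{M×M} with QᴴQ = QQᴴ = I_M (i.e., Q is unitary), a quaternion matrix R ∈ ℍ^{M×N}, and a permutation π of {0,…,N−1}, such that A = Q R and the column-permuted matrix R′ defined by R′(i,j) = R(i, π(j)) is upper triangular, i.e., R′(i,j) = 0 whenever j < i (quaternion Qatar Riyal (QR) decomposition). -/
open Matrix
open Quaternion

local notation "H" => Quaternion ℝ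

lemma qqr_householder {m : ℕ} (v : Fin (m+1) → H) :
    ∃ U : Matrix (Fin (m+1)) (Fin (m+1)) H,
      Uᴴ * U = 1 ∧ U * Uᴴ = 1 ∧ ∀ i : Fin (m+1), i ≠ 0 → (U *ᵥ v) i = 0 := by
  classical
  by_cases hv : ∀ i : Fin (m+1), i ≠ 0 → v i = 0
  · exact ⟨1, by simp, by simp, fun i hi => by simpa using hv i hi⟩
  push_neg at hv
  obtain ⟨i₀, hi₀, hvi₀⟩ := hv
  set S : ℝ := ∑ i, normSq (v i) with hSdef
  have hSpos : 0 < S := by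
    refine Finset.sum_pos' (fun i _ => normSq_nonneg) ⟨i₀, Finset.mem_univ _, ?_⟩
    exact lt_of_le_of_ne normSq_nonneg (fun h => hvi₀ (normSq_eq_zero.1 h.symm))
  set s : ℝ := Real.sqrt S with hsdef
  have hs : 0 < s := Real.sqrt_pos.2 hSpos
  have hs2 : s * s = S := Real.mul_self_sqrt hSpos.le
  set α : H := if v 0 = 0 then ((s : ℝ) : H) else -((((s / ‖v 0‖ : ℝ)) : H) * v 0) with hα
  set a : ℝ := if v 0 = 0 then (0:ℝ) else -(s * ‖v 0‖) with ha
  have ha_nonpos : a ≤ 0 := by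
    rw [ha]; split_ifs
    · exact le_rfl
    · exact neg_nonpos.2 (by positivity)
  have key1 : star α * v 0 = ((a : ℝ) : H) := by
    rw [hα, ha]
    split_ifs with h0
    · simp [h0]
    · have hr : ‖v 0‖ ≠ 0 := norm_ne_zero_iff.2 h0
      rw [star_neg, StarMul.star_mul, star_coe, neg_mul, ← coe_commutes, mul_assoc,
        star_mul_self, ← coe_mul, ← coe_neg]
      congr 1
      rw [normSq_eq_norm_mul_self]
      field_simp
  have key3 : star (v 0) * α = ((a : ℝ) : H) := by
    have := congrArg star key1
    rwa [StarMul.star_mul, star_star, star_coe] at this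
  have key2 : star α * α = ((s * s : ℝ) : H) := by
    rw [star_mul_self]
    congr 1
    rw [hα]
    split_ifs with h0
    · rw [normSq_coe]; ring
    · have hr : ‖v 0‖ ≠ 0 := norm_ne_zero_iff.2 h0
      rw [normSq_neg, normSq.map_mul, normSq_coe, normSq_eq_norm_mul_self]
      field_simp
  set u : Fin (m+1) → H := fun i => if i = 0 then v 0 - α else v i with hu
  have hu0 : u 0 = v 0 - α := by simp [hu]
  have husucc : ∀ j : Fin m, u j.succ = v j.succ := fun j => by
    simp [hu, Fin.succ_ne_zero]
  set t : ℝ := (S - a)⁻¹ with ht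
  have hSa : S - a ≠ 0 := by nlinarith
  have htSa : t * (S - a) = 1 := inv_mul_cancel₀ hSa
  have hScoe : ((S : ℝ) : H) = ∑ j, star (v j) * v j := by
    simp_rw [star_mul_self, hSdef, ← Quaternion.algebraMap_def, map_sum]
  have factA : ∑ j, star (u j) * v j = ((S - a : ℝ) : H) := by
    rw [Fin.sum_univ_succ, hu0]
    have h2 : ((S : ℝ) : H) = star (v 0) * v 0 + ∑ j : Fin m, star (v j.succ) * v j.succ := by
      rw [hScoe, Fin.sum_univ_succ]
    simp_rw [husucc]
    rw [coe_sub]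
    rw [h2, star_sub, sub_mul, key1]
    abel
  have factB : ∑ j, star (u j) * u j = ((2 * (S - a) : ℝ) : H) := by
    rw [Fin.sum_univ_succ, hu0]
    have h2 : ((S : ℝ) : H) = star (v 0) * v 0 + ∑ j : Fin m, star (v j.succ) * v j.succ := by
      rw [hScoe, Fin.sum_univ_succ]
    simp_rw [husucc]
    have expand : star (v 0 - α) * (v 0 - α)
        = star (v 0) * v 0 - star (v 0) * α - star α * v 0 + star α * α := by
      rw [star_sub]; noncomm_ring
    rw [expand, key1, key3, key2]
    have : (((2 * (S - a) : ℝ)) : H) = ((S:ℝ):H) - ((a:ℝ):H) - ((a:ℝ):H) + ((s*s:ℝ):H) := by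
      rw [hs2, ← coe_sub, ← coe_sub, ← coe_add]
      congr 1
      ring
    rw [this, h2]
    abel
  set P : Matrix (Fin (m+1)) (Fin (m+1)) H := Matrix.of fun i j => u i * star (u j) with hP
  set U : Matrix (Fin (m+1)) (Fin (m+1)) H := 1 - t • P with hU
  haveI : StarModule ℝ H := ⟨fun c x => by ext <;> simp⟩
  have hPH : Pᴴ = P := by
    refine Matrix.ext fun i j => ?_
    rw [Matrix.conjTranspose_apply]
    simp [hP, StarMul.star_mul]
  have hUH : Uᴴ = U := by
    rw [hU, Matrix.conjTranspose_sub, Matrix.conjTranspose_smul, Matrix.conjTranspose_one,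
      hPH, star_trivial]
  have hPP : P * P = (2 * (S - a)) • P := by
    refine Matrix.ext fun i j => ?_
    rw [Matrix.mul_apply]
    simp only [hP, Matrix.of_apply, Matrix.smul_apply]
    calc ∑ k, u i * star (u k) * (u k * star (u j))
        = u i * (∑ k, star (u k) * u k) * star (u j) := by
          rw [Finset.mul_sum, Finset.sum_mul]
          exact Finset.sum_congr rfl fun k _ => by noncomm_ring
      _ = u i * ((2 * (S - a) : ℝ) : H) * star (u j) := by rw [factB]
      _ = (2 * (S - a)) • (u i * star (u j)) := by
          rw [Quaternion.mul_coe_eq_smul, smul_mul_assoc]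
  have hUU : U * U = 1 := by
    have expand : U * U = 1 - t • P - t • P + (t * t) • (P * P) := by
      rw [hU, Matrix.sub_mul, Matrix.one_mul, Matrix.mul_sub, Matrix.mul_one,
        Matrix.smul_mul, Matrix.mul_smul, smul_smul]
      abel
    rw [expand, hPP, smul_smul]
    have hcoef : t * t * (2 * (S - a)) = t + t := by
      rw [ht]; field_simp; ring
    rw [hcoef, add_smul]
    abel
  refine ⟨U, by rw [hUH, hUU], by rw [hUH, hUU], fun i hi => ?_⟩
  have hPv : (P *ᵥ v) i = u i * ((S - a : ℝ) : H) := by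
    rw [Matrix.mulVec, dotProduct]
    calc ∑ j, P i j * v j = ∑ j, u i * (star (u j) * v j) := by
          exact Finset.sum_congr rfl fun k _ => by simp only [hP, Matrix.of_apply]; noncomm_ring
      _ = u i * ∑ j, star (u j) * v j := by rw [Finset.mul_sum]
      _ = u i * ((S - a : ℝ) : H) := by rw [factA]
  have : (U *ᵥ v) i = v i - t • (P *ᵥ v) i := by
    rw [hU, Matrix.sub_mulVec, Matrix.one_mulVec, Matrix.smul_mulVec]
    rfl
  rw [this, hPv, ← coe_commutes, ← smul_mul_assoc, Quaternion.smul_coe, htSa]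
  have hui : u i = v i := by simp [hu, hi]
  rw [coe_one, one_mul, hui, sub_self]

lemma qqr_main : ∀ (M : ℕ) (N : ℕ) (A : Matrix (Fin M) (Fin N) H),
    ∃ (Q : Matrix (Fin M) (Fin M) H) (R : Matrix (Fin M) (Fin N) H),
      Qᴴ * Q = 1 ∧ Q * Qᴴ = 1 ∧ A = Q * R ∧
      ∀ (i : Fin M) (j : Fin N), (j : ℕ) < (i : ℕ) → R i j = 0 := by
  intro M
  induction M with
  | zero =>
    intro N A
    exact ⟨1, A, by simp, by simp, by simp, fun i => i.elim0⟩
  | succ m IH =>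
    intro N A
    match N with
    | 0 => exact ⟨1, A, by simp, by simp, by simp, fun i j => j.elim0⟩
    | n + 1 =>
      obtain ⟨U, hU1, hU2, hUv⟩ := qqr_householder (fun i => A i 0)
      set B : Matrix (Fin (m+1)) (Fin (n+1)) H := U * A with hBdef
      have hB0 : ∀ i : Fin (m+1), i ≠ 0 → B i 0 = 0 := by
        intro i hi
        have := hUv i hi
        simpa [hBdef, Matrix.mulVec, Matrix.mul_apply, dotProduct] using this
      obtain ⟨Q', R', hQ'1, hQ'2, hA', hR'⟩ :=
        IH n (Matrix.of fun i j => B i.succ j.succ)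
      set e : Fin (m+1) ≃ Fin m ⊕ Unit :=
        (finSuccEquiv m).trans (Equiv.optionEquivSumPUnit _) with he
      have he0 : e 0 = Sum.inr () := by
        simp [he, finSuccEquiv_zero]
      have hesucc : ∀ i : Fin m, e i.succ = Sum.inl i := by
        intro i; simp [he, finSuccEquiv_succ]
      set E : Matrix (Fin (m+1)) (Fin (m+1)) H :=
        (Matrix.fromBlocks Q' 0 0 (1 : Matrix Unit Unit H)).submatrix e e with hE
      have hE1 : Eᴴ * E = 1 := by
        rw [hE, Matrix.conjTranspose_submatrix, Matrix.submatrix_mul_equiv,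
          Matrix.fromBlocks_conjTranspose, Matrix.fromBlocks_multiply]
        simp [hQ'1, Matrix.fromBlocks_one, Matrix.submatrix_one_equiv]
      have hE2 : E * Eᴴ = 1 := by
        rw [hE, Matrix.conjTranspose_submatrix, Matrix.submatrix_mul_equiv,
          Matrix.fromBlocks_conjTranspose, Matrix.fromBlocks_multiply]
        simp [hQ'2, Matrix.fromBlocks_one, Matrix.submatrix_one_equiv]
      set Q : Matrix (Fin (m+1)) (Fin (m+1)) H := Uᴴ * E with hQ
      set R : Matrix (Fin (m+1)) (Fin (n+1)) H := Eᴴ * B with hR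
      have hQ1 : Qᴴ * Q = 1 := by
        rw [hQ, Matrix.conjTranspose_mul, Matrix.conjTranspose_conjTranspose,
          Matrix.mul_assoc, ← Matrix.mul_assoc U, hU2, Matrix.one_mul, hE1]
      have hQ2 : Q * Qᴴ = 1 := by
        rw [hQ, Matrix.conjTranspose_mul, Matrix.conjTranspose_conjTranspose,
          Matrix.mul_assoc, ← Matrix.mul_assoc E, hE2, Matrix.one_mul, hU1]
      have hQR : A = Q * R := by
        rw [hQ, hR, Matrix.mul_assoc, ← Matrix.mul_assoc E, hE2, Matrix.one_mul,
          hBdef, ← Matrix.mul_assoc, hU1, Matrix.one_mul]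
      have hE_entry_zero : ∀ i' : Fin m, E 0 i'.succ = 0 := by
        intro i'
        rw [hE, Matrix.submatrix_apply, he0, hesucc]
        rfl
      have hE_entry_succ : ∀ (k' i' : Fin m), E k'.succ i'.succ = Q' k' i' := by
        intro k' i'
        rw [hE, Matrix.submatrix_apply, hesucc, hesucc]
        rfl
      have hRentry : ∀ (i' : Fin m) (j : Fin (n+1)),
          R i'.succ j = ∑ k' : Fin m, star (Q' k' i') * B k'.succ j := by
        intro i' j
        rw [hR, Matrix.mul_apply, Fin.sum_univ_succ]
        rw [Matrix.conjTranspose_apply, hE_entry_zero, star_zero, zero_mul, zero_add]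
        refine Finset.sum_congr rfl fun k' _ => ?_
        rw [Matrix.conjTranspose_apply, hE_entry_succ]
      refine ⟨Q, R, hQ1, hQ2, hQR, ?_⟩
      intro i j hij
      rcases Fin.eq_zero_or_eq_succ i with rfl | ⟨i', rfl⟩
      · exact absurd hij (by simp)
      rcases Fin.eq_zero_or_eq_succ j with rfl | ⟨j', rfl⟩
      · rw [hRentry]
        refine Finset.sum_eq_zero fun k' _ => ?_
        rw [hB0 _ (Fin.succ_ne_zero _), mul_zero]
      · have hj'i' : (j' : ℕ) < (i' : ℕ) := by
          simpa [Fin.val_succ] using hij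
        rw [hRentry]
        have hstep : ∑ k' : Fin m, star (Q' k' i') * B k'.succ j'.succ
            = (Q'ᴴ * (Matrix.of fun (i : Fin m) (j : Fin n) => B i.succ j.succ)) i' j' := by
          rw [Matrix.mul_apply]
          refine Finset.sum_congr rfl fun k' _ => ?_
          rw [Matrix.conjTranspose_apply]
          rfl
        rw [hstep, hA', ← Matrix.mul_assoc, hQ'1, Matrix.one_mul]
        exact hR' i' j' hj'i'


/-- Quaternion Qatar Riyal (QR) decomposition: every quaternion matrix
`A ∈ ℍ^{M×N}` factors as `A = Q R` with `Q` unitary and `R` weakly upper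
triangular, i.e. there is a permutation `π` of the columns such that the
column-permuted matrix `R'(i,j) = R(i, π(j))` is upper triangular. -/
theorem qqr_exists (M N : ℕ) (A : Matrix (Fin M) (Fin N) (Quaternion ℝ)) :
    ∃ (Q : Matrix (Fin M) (Fin M) (Quaternion ℝ))
      (R : Matrix (Fin M) (Fin N) (Quaternion ℝ))
      (π : Equiv.Perm (Fin N)),
      Qᴴ * Q = 1 ∧ Q * Qᴴ = 1 ∧
      A = Q * R ∧
      (∀ (i : Fin M) (j : Fin N), (j : ℕ) < (i : ℕ) → R i (π j) = 0) := by
  obtain ⟨Q, R, h1, h2, h3, h4⟩ := qqr_main M N A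
  exact ⟨Q, R, Equiv.refl _, h1, h2, h3, fun i j hij => h4 i j hij⟩
end

section
/- For every quaternion matrix Q ∈ ℍ^{M×N} and for all m ∈ {0,…,M−1}, n ∈ {0,…,N−1}, one has IQDCT^R(FQDCT^R(Q))(m,n) = Q(m,n); that is, the right inverse quaternion discrete cosine transform inverts the right forward quaternion discrete cosine transform. -/
/-!
Both transforms act on the two indices separately through the real DCT-II matrix
`C u m = α(u) cos(π(2m+1)u/(2M))`: the forward one is `X ↦ C (X q̇) Dᵀ`, the inverse one is
`Y ↦ (Cᵀ Y D) (-q̇)`, and real scalars commute with `q̇`. So the composite is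
`Cᵀ C (X q̇) Dᵀ D (-q̇) = X q̇ (-q̇) = X` once `C` is orthogonal. Orthogonality is checked on the
rows: by the product-to-sum formula, `(C Cᵀ) u u'` is a combination of the sums
`S j = ∑_{m<M} cos(π(2m+1)j/(2M))` for `j = u ± u'`, and `sin(πj/(2M)) · S j` telescopes to
`sin(πj)/2 = 0`, so `S j = 0` for `0 < |j| < 2M`.
-/

open Matrix

/-- Normalization factor of the DCT: `α(u) = √(1/M)` if `u = 0`, `√(2/M)` otherwise. -/
noncomputable def dctAlpha (M : ℕ) (u : Fin M) : ℝ :=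
  if (u : ℕ) = 0 then Real.sqrt (1 / M) else Real.sqrt (2 / M)

/-- DCT kernel `N(u,v,m,n) = cos(π(2m+1)u/(2M)) · cos(π(2n+1)v/(2N))`. -/
noncomputable def dctKer (M N : ℕ) (u : Fin M) (v : Fin N) (m : Fin M) (n : Fin N) : ℝ :=
  Real.cos (Real.pi * (2 * (m : ℝ) + 1) * (u : ℝ) / (2 * (M : ℝ))) *
    Real.cos (Real.pi * (2 * (n : ℝ) + 1) * (v : ℝ) / (2 * (N : ℝ)))

/-- Right forward quaternion discrete cosine transform:
`FQDCT^R(Q)(u,v) = α(u)β(v) Σ_m Σ_n Q(m,n) · N(u,v,m,n) · q̇`. -/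
noncomputable def FQDCTR (M N : ℕ) (q : Quaternion ℝ)
    (Q : Matrix (Fin M) (Fin N) (Quaternion ℝ)) :
    Matrix (Fin M) (Fin N) (Quaternion ℝ) :=
  Matrix.of fun u v =>
    (dctAlpha M u * dctAlpha N v) •
      ∑ m : Fin M, ∑ n : Fin N, (dctKer M N u v m n) • (Q m n * q)

/-- Right inverse quaternion discrete cosine transform:
`IQDCT^R(C)(m,n) = Σ_u Σ_v α(u)β(v) · C(u,v) · N(u,v,m,n) · q̇⁻¹` with `q̇⁻¹ = −q̇`. -/
noncomputable def IQDCTR (M N : ℕ) (q : Quaternion ℝ)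
    (C : Matrix (Fin M) (Fin N) (Quaternion ℝ)) :
    Matrix (Fin M) (Fin N) (Quaternion ℝ) :=
  Matrix.of fun m n =>
    ∑ u : Fin M, ∑ v : Fin N,
      (dctAlpha M u * dctAlpha N v) • ((dctKer M N u v m n) • (C u v * (-q)))

open Real

theorem sum_cos_dct_eq_ite (M : ℕ) (j : ℤ) (hj : |j| < 2 * M) :
    ∑ m : Fin M, cos (π * (2 * (m : ℝ) + 1) * j / (2 * M)) =
      if j = 0 then (M : ℝ) else 0 := by
  split_ifs with hj0
  · simp [hj0]
  obtain ⟨hjl, hjr⟩ : -(2 * M : ℝ) < j ∧ (j : ℝ) < 2 * M :=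
    abs_lt.mp (by exact_mod_cast hj)
  have hM : (0 : ℝ) < M := by linarith
  set x := π * j / (2 * M) with hx
  have hsin : sin x ≠ 0 := by
    have hxl : -π < x := by rw [hx, lt_div_iff₀ (by positivity)]; nlinarith [pi_pos]
    have hxr : x < π := by rw [hx, div_lt_iff₀ (by positivity)]; nlinarith [pi_pos]
    rw [Ne, sin_eq_zero_iff_of_lt_of_lt hxl hxr, hx]
    have : (j : ℝ) ≠ 0 := by exact_mod_cast hj0
    positivity
  have htelescope := sin_mul_sum_cos M (2 * x) x
  have hMx : (M : ℝ) * (2 * x) / 2 = j * π / 2 := by rw [hx]; field_simp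
  have hrhs : sin (j * π / 2) * cos ((M - 1) * (2 * x) / 2 + x) = 0 := by
    have h := sin_two_mul (j * π / 2)
    rw [show 2 * (j * π / 2) = j * π by ring, sin_int_mul_pi] at h
    rw [show (M - 1 : ℝ) * (2 * x) / 2 + x = j * π / 2 by rw [← hMx]; ring]
    linarith
  rw [hMx, mul_div_cancel_left₀ _ two_ne_zero, hrhs] at htelescope
  rw [Fin.sum_univ_eq_sum_range (fun m => cos (π * (2 * (m : ℝ) + 1) * j / (2 * M)))]
  convert (mul_eq_zero.mp htelescope).resolve_left hsin using 3 with m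
  rw [hx]; ring

section SeparableTransform

variable {R E ι ι' ι'' κ κ' κ'' : Type*} [CommSemiring R] [AddCommMonoid E] [Module R E]
  [Fintype ι'] [Fintype ι''] [Fintype κ'] [Fintype κ'']

def separableTransform (A : Matrix ι ι' R) (B : Matrix κ κ' R) (X : ι' → κ' → E) :
    ι → κ → E :=
  fun i k => ∑ i' : ι', ∑ k' : κ', (A i i' * B k k') • X i' k'

theorem separableTransform_separableTransform (A : Matrix ι ι' R) (A' : Matrix ι' ι'' R)
    (B : Matrix κ κ' R) (B' : Matrix κ' κ'' R) (X : ι'' → κ'' → E) :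
    separableTransform A B (separableTransform A' B' X) =
      separableTransform (A * A') (B * B') X := by
  funext i k
  calc separableTransform A B (separableTransform A' B' X) i k
      = ∑ p : ι' × κ', ∑ r : ι'' × κ'',
          (A i p.1 * B k p.2 * (A' p.1 r.1 * B' p.2 r.2)) • X r.1 r.2 := by
        simp only [separableTransform, Fintype.sum_prod_type, Finset.smul_sum, smul_smul]
    _ = ∑ r : ι'' × κ'', ((A * A') i r.1 * (B * B') k r.2) • X r.1 r.2 := by
        rw [Finset.sum_comm]
        refine Finset.sum_congr rfl fun r _ => ?_
        rw [← Finset.sum_smul, mul_apply, mul_apply, Finset.sum_mul_sum, Fintype.sum_prod_type]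
        congr 1
        exact Finset.sum_congr rfl fun a _ => Finset.sum_congr rfl fun b _ => by ring
    _ = separableTransform (A * A') (B * B') X i k := Fintype.sum_prod_type _

theorem separableTransform_one [DecidableEq ι'] [DecidableEq κ'] (X : ι' → κ' → E) :
    separableTransform (1 : Matrix ι' ι' R) (1 : Matrix κ' κ' R) X = X := by
  funext i k
  simp [separableTransform, one_apply, ite_smul]

end SeparableTransform

theorem dctAlpha_mul_self (M : ℕ) (u : Fin M) :
    dctAlpha M u * dctAlpha M u = if (u : ℕ) = 0 then (1 / M : ℝ) else 2 / M := by
  unfold dctAlpha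
  split_ifs <;> exact Real.mul_self_sqrt (by positivity)

noncomputable def dctMatrix (M : ℕ) : Matrix (Fin M) (Fin M) ℝ :=
  Matrix.of fun u m => dctAlpha M u * cos (π * (2 * (m : ℝ) + 1) * (u : ℝ) / (2 * (M : ℝ)))

theorem dctMatrix_mul_transpose (M : ℕ) : dctMatrix M * (dctMatrix M)ᵀ = 1 := by
  ext u u'
  have hM : (0 : ℝ) < M := by exact_mod_cast u.pos
  have hlt : |(u : ℤ) - u'| < 2 * M ∧ |(u : ℤ) + u'| < 2 * M := by
    constructor <;> rw [abs_lt] <;> omega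
  have hcos (a b : ℝ) : cos a * cos b = (cos (a - b) + cos (a + b)) / 2 := by
    rw [cos_sub, cos_add]; ring
  have hsum : (dctMatrix M * (dctMatrix M)ᵀ) u u' = dctAlpha M u * dctAlpha M u' *
      ((∑ m : Fin M, cos (π * (2 * (m : ℝ) + 1) * ((u : ℤ) - u' : ℤ) / (2 * M)) +
        ∑ m : Fin M, cos (π * (2 * (m : ℝ) + 1) * ((u : ℤ) + u' : ℤ) / (2 * M))) / 2) := by
    rw [← Finset.sum_add_distrib, Finset.sum_div, Finset.mul_sum, mul_apply]
    refine Finset.sum_congr rfl fun m _ => ?_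
    rw [transpose_apply, dctMatrix, of_apply, of_apply, mul_mul_mul_comm, hcos]
    push_cast
    ring_nf
  rw [hsum, sum_cos_dct_eq_ite M _ hlt.1, sum_cos_dct_eq_ite M _ hlt.2, one_apply]
  by_cases huu : u = u'
  · subst huu
    by_cases hu : (u : ℕ) = 0
    · have hu' : (u : ℤ) + u = 0 := by omega
      rw [dctAlpha_mul_self, if_pos hu, if_pos (sub_self _), if_pos hu', if_pos rfl]
      field_simp
      ring
    · have hu' : (u : ℤ) + u ≠ 0 := by omega
      rw [dctAlpha_mul_self, if_neg hu, if_pos (sub_self _), if_neg hu', if_pos rfl, add_zero]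
      field_simp
  · have hne : (u : ℤ) - u' ≠ 0 := by omega
    have hne' : (u : ℤ) + u' ≠ 0 := by omega
    simp [huu, hne, hne']

theorem dctMatrix_transpose_mul (M : ℕ) : (dctMatrix M)ᵀ * dctMatrix M = 1 :=
  mul_eq_one_comm.mp (dctMatrix_mul_transpose M)


theorem FQDCTR_eq_separableTransform (M N : ℕ) (q : Quaternion ℝ)
    (Q : Matrix (Fin M) (Fin N) (Quaternion ℝ)) :
    FQDCTR M N q Q =
      separableTransform (dctMatrix M) (dctMatrix N) fun (m : Fin M) (n : Fin N) => Q m n * q := by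
  funext u v
  simp only [FQDCTR, separableTransform, of_apply, Finset.smul_sum, smul_smul]
  refine Finset.sum_congr rfl fun m _ => Finset.sum_congr rfl fun n _ => ?_
  simp only [dctMatrix, dctKer, of_apply]
  ring_nf

theorem IQDCTR_apply_eq_separableTransform_mul (M N : ℕ) (q : Quaternion ℝ)
    (C : Matrix (Fin M) (Fin N) (Quaternion ℝ)) (m : Fin M) (n : Fin N) :
    IQDCTR M N q C m n = separableTransform (dctMatrix M)ᵀ (dctMatrix N)ᵀ C m n * -q := by
  simp only [IQDCTR, separableTransform, of_apply, Finset.sum_mul, smul_mul_assoc, smul_smul]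
  refine Finset.sum_congr rfl fun u _ => Finset.sum_congr rfl fun v _ => ?_
  simp only [transpose_apply, dctMatrix, dctKer, of_apply]
  ring_nf

theorem iqdctR_fqdctR_general (M N : ℕ)
    (q : Quaternion ℝ) (hq : q ^ 2 = -1)
    (Q : Matrix (Fin M) (Fin N) (Quaternion ℝ)) (m : Fin M) (n : Fin N) :
    IQDCTR M N q (FQDCTR M N q Q) m n = Q m n := by
  have hq_mul_neg : q * -q = 1 := by rw [mul_neg, ← sq, hq, neg_neg]
  rw [IQDCTR_apply_eq_separableTransform_mul, FQDCTR_eq_separableTransform,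
    separableTransform_separableTransform, dctMatrix_transpose_mul, dctMatrix_transpose_mul,
    separableTransform_one, mul_assoc, hq_mul_neg, mul_one]

/-- The right inverse quaternion discrete cosine transform inverts the right
forward quaternion discrete cosine transform. -/
theorem iqdctR_fqdctR (M N : ℕ) (hM : 1 ≤ M) (hN : 1 ≤ N)
    (q : Quaternion ℝ) (hre : q.re = 0) (hq : q ^ 2 = -1)
    (Q : Matrix (Fin M) (Fin N) (Quaternion ℝ)) (m : Fin M) (n : Fin N) :
    IQDCTR M N q (FQDCTR M N q Q) m n = Q m n :=
  iqdctR_fqdctR_general M N q hq Q m n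
end

section
/- Let B, Y, W, Z ∈ ℍ^{M×N} be quaternion matrices and let μ > 0 be real. Define f(X) = ‖X + (1/μ)Y − B‖_F² + ‖W + (1/μ)Z − FQDCT^L(X)‖_F² for X ∈ ℍ^{M×N}. Then X* = (1/2)·(B − (1/μ)Y + IQDCT^L(W + (1/μ)Z)) is a global minimizer of f, i.e., f(X*) ≤ f(X) for every X ∈ ℍ^{M×N}. -/
open Matrix

/-- Left forward quaternion discrete cosine transform:
`FQDCT^L(Q)(u,v) = α(u)β(v) Σ_m Σ_n q̇ · Q(m,n) · N(u,v,m,n)`. -/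
noncomputable def FQDCTL (M N : ℕ) (q : Quaternion ℝ)
    (Q : Matrix (Fin M) (Fin N) (Quaternion ℝ)) :
    Matrix (Fin M) (Fin N) (Quaternion ℝ) :=
  Matrix.of fun u v =>
    (dctAlpha M u * dctAlpha N v) •
      ∑ m : Fin M, ∑ n : Fin N, (dctKer M N u v m n) • (q * Q m n)

/-- Left inverse quaternion discrete cosine transform:
`IQDCT^L(C)(m,n) = Σ_u Σ_v α(u)β(v) · q̇⁻¹ · C(u,v) · N(u,v,m,n)` with `q̇⁻¹ = −q̇`. -/
noncomputable def IQDCTL (M N : ℕ) (q : Quaternion ℝ)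
    (C : Matrix (Fin M) (Fin N) (Quaternion ℝ)) :
    Matrix (Fin M) (Fin N) (Quaternion ℝ) :=
  Matrix.of fun m n =>
    ∑ u : Fin M, ∑ v : Fin N,
      (dctAlpha M u * dctAlpha N v) • ((dctKer M N u v m n) • ((-q) * C u v))

/-- Frobenius norm of a quaternion matrix: `‖A‖_F = sqrt(Σ_{m,n} |A(m,n)|²)`. -/
noncomputable def frob {M N : ℕ} (A : Matrix (Fin M) (Fin N) (Quaternion ℝ)) : ℝ :=
  Real.sqrt (∑ m : Fin M, ∑ n : Fin N, ‖A m n‖ ^ 2)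

section Aux

open Finset Real RealInnerProductSpace

lemma cos_mul_cos' (x y : ℝ) : Real.cos x * Real.cos y = (Real.cos (x+y) + Real.cos (x-y))/2 := by
  rw [Real.cos_add, Real.cos_sub]; ring

lemma cos_sum_eq (M k : ℕ) (hM : 0 < M) (hk0 : 0 < k) (hk : k < 2*M) :
    ∑ u ∈ Finset.range M, Real.cos (Real.pi * k * u / M) = (1 - (-1:ℝ)^k)/2 := by
  have hMR : (0:ℝ) < M := by exact_mod_cast hM
  set θ : ℝ := Real.pi * k / M with hθ
  have hs : 0 < Real.sin (θ/2) := by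
    apply Real.sin_pos_of_pos_of_lt_pi
    · have : (0:ℝ) < k := by exact_mod_cast hk0
      rw [hθ]; positivity
    · rw [hθ]
      rw [div_div, div_lt_iff₀ (by positivity)]
      have : (k:ℝ) < 2*M := by exact_mod_cast hk
      nlinarith [Real.pi_pos]
  have key : ∀ u : ℕ, Real.cos (u*θ) * (2*Real.sin (θ/2))
      = Real.sin ((u+1)*θ - θ/2) - Real.sin (u*θ - θ/2) := by
    intro u
    have h := Real.sin_sub_sin ((u+1)*θ - θ/2) (u*θ - θ/2)
    have h1 : (((u:ℝ)+1)*θ - θ/2 - (u*θ - θ/2))/2 = θ/2 := by ring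
    have h2 : (((u:ℝ)+1)*θ - θ/2 + (u*θ - θ/2))/2 = u*θ := by ring
    rw [h1, h2] at h; rw [h]; ring
  have tel : ∑ u ∈ range M, (Real.sin (((u:ℝ)+1)*θ - θ/2) - Real.sin ((u:ℝ)*θ - θ/2))
      = Real.sin ((M:ℝ)*θ - θ/2) - Real.sin ((0:ℝ)*θ - θ/2) := by
    have := Finset.sum_range_sub (fun u : ℕ => Real.sin ((u:ℝ)*θ - θ/2)) M
    simpa [Nat.cast_add, Nat.cast_one] using this
  have hMθ : (M:ℝ)*θ = k * Real.pi := by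
    rw [hθ]; field_simp
  have hend : Real.sin ((M:ℝ)*θ - θ/2) = -((-1:ℝ)^k * Real.sin (θ/2)) := by
    rw [hMθ]; exact Real.sin_nat_mul_pi_sub (θ/2) k
  have main : (∑ u ∈ range M, Real.cos ((u:ℝ)*θ)) * (2*Real.sin (θ/2))
      = (1 - (-1:ℝ)^k) * Real.sin (θ/2) := by
    rw [Finset.sum_mul]
    rw [Finset.sum_congr rfl (fun u _ => key u), tel, hend]
    simp [Real.sin_neg]
    ring
  have hcong : ∀ u ∈ range M, Real.cos (Real.pi * k * u / M) = Real.cos ((u:ℝ)*θ) := by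
    intro u _; congr 1; rw [hθ]; ring
  rw [Finset.sum_congr rfl hcong]
  have h2 : ((∑ u ∈ range M, Real.cos ((u:ℝ)*θ))*2) * Real.sin (θ/2)
      = (1 - (-1:ℝ)^k) * Real.sin (θ/2) := by linear_combination main
  have := mul_right_cancel₀ (ne_of_gt hs) h2
  linarith

/-- Half of the DCT kernel (a single cosine factor). -/
noncomputable def ccos (M : ℕ) (u m : Fin M) : ℝ :=
  Real.cos (Real.pi * (2 * (m : ℝ) + 1) * (u : ℝ) / (2 * (M : ℝ)))

lemma dctKer_eq (M N : ℕ) (u : Fin M) (v : Fin N) (m : Fin M) (n : Fin N) :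
    dctKer M N u v m n = ccos M u m * ccos N v n := rfl

lemma dctAlpha_sq (M : ℕ) (hM : 0 < M) (u : Fin M) :
    (dctAlpha M u)^2 = if (u:ℕ) = 0 then 1/(M:ℝ) else 2/(M:ℝ) := by
  have hMR : (0:ℝ) < M := by exact_mod_cast hM
  unfold dctAlpha; split <;> rw [Real.sq_sqrt (by positivity)]

lemma ccos_orth (M : ℕ) (hM : 0 < M) (m m' : Fin M) :
    ∑ u : Fin M, (dctAlpha M u)^2 * (ccos M u m * ccos M u m') = if m = m' then 1 else 0 := by
  have hMR : (0:ℝ) < (M:ℝ) := by exact_mod_cast hM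
  have hM0 : (M:ℝ) ≠ 0 := ne_of_gt hMR
  have hsplit : ∀ u : Fin M, (dctAlpha M u)^2 * (ccos M u m * ccos M u m')
      = 2/(M:ℝ) * (ccos M u m * ccos M u m') - (if u = (⟨0, hM⟩ : Fin M) then 1/(M:ℝ) else 0) := by
    intro u
    rw [dctAlpha_sq M hM u]
    by_cases h : (u:ℕ) = 0
    · have hu : u = ⟨0,hM⟩ := Fin.ext h
      have hu0 : (u:ℝ) = 0 := by exact_mod_cast h
      have h1 : ccos M u m = 1 := by simp [ccos, hu0]
      have h2 : ccos M u m' = 1 := by simp [ccos, hu0]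
      rw [if_pos h, if_pos hu, h1, h2]; ring
    · have hu : ¬ (u = ⟨0,hM⟩) := by simpa [Fin.ext_iff] using h
      rw [if_neg h, if_neg hu]; ring
  rw [Finset.sum_congr rfl (fun u _ => hsplit u), Finset.sum_sub_distrib,
    Finset.sum_ite_eq' Finset.univ (⟨0,hM⟩ : Fin M) (fun _ => 1/(M:ℝ))]
  simp only [Finset.mem_univ, if_true]
  rw [← Finset.mul_sum]
  have hprod : ∀ u : Fin M, ccos M u m * ccos M u m' =
      (Real.cos (Real.pi * ((m:ℝ)+(m':ℝ)+1) * (u:ℝ) / M) + Real.cos (Real.pi * ((m:ℝ)-(m':ℝ)) * (u:ℝ) / M)) / 2 := by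
    intro u
    unfold ccos
    rw [cos_mul_cos']
    have e1 : Real.pi * (2*(m:ℝ)+1) * u / (2*M) + Real.pi * (2*(m':ℝ)+1) * u / (2*M)
        = Real.pi * ((m:ℝ)+(m':ℝ)+1) * u / M := by field_simp; ring
    have e2 : Real.pi * (2*(m:ℝ)+1) * u / (2*M) - Real.pi * (2*(m':ℝ)+1) * u / (2*M)
        = Real.pi * ((m:ℝ)-(m':ℝ)) * u / M := by field_simp; ring
    rw [e1, e2]
  rw [Finset.sum_congr rfl (fun u _ => hprod u)]
  have hfin : ∀ g : ℕ → ℝ, (∑ u : Fin M, g (u:ℕ)) = ∑ u ∈ range M, g u :=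
    fun g => Fin.sum_univ_eq_sum_range g M
  rw [hfin (fun i : ℕ => (Real.cos (Real.pi * ((m:ℝ)+(m':ℝ)+1) * (i:ℝ) / M) + Real.cos (Real.pi * ((m:ℝ)-(m':ℝ)) * (i:ℝ) / M)) / 2)]
  have hk1 : ∑ u ∈ range M, Real.cos (Real.pi * ((m:ℝ)+(m':ℝ)+1) * (u:ℝ) / M)
      = (1 - (-1:ℝ)^(m.val+m'.val+1))/2 := by
    have : ((m:ℝ)+(m':ℝ)+1) = ((m.val+m'.val+1 : ℕ) : ℝ) := by push_cast; ring
    rw [Finset.sum_congr rfl (fun u _ => by rw [this])]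
    exact cos_sum_eq M (m.val+m'.val+1) hM (by omega) (by have := m.isLt; have := m'.isLt; omega)
  by_cases hmm : m = m'
  · subst hmm
    have hz : ∑ u ∈ range M, Real.cos (Real.pi * ((m:ℝ)-(m:ℝ)) * (u:ℝ) / M) = M := by
      have : ∀ u ∈ range M, Real.cos (Real.pi * ((m:ℝ)-(m:ℝ)) * (u:ℝ) / M) = 1 := by
        intro u _; rw [show Real.pi * ((m:ℝ)-(m:ℝ)) * (u:ℝ) / M = 0 by ring]; exact Real.cos_zero
      rw [Finset.sum_congr rfl this]; simp
    have hodd : (-1:ℝ)^(m.val+m.val+1) = -1 := Odd.neg_one_pow ⟨m.val, by ring⟩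
    rw [← Finset.sum_div, Finset.sum_add_distrib, hk1, hz, hodd, if_pos rfl]
    field_simp; ring
  · have hne : m.val ≠ m'.val := fun h => hmm (Fin.ext h)
    have habs : ∃ j : ℕ, 0 < j ∧ j < 2*M ∧ Odd ((m.val+m'.val+1) + j) ∧
        (∑ u ∈ range M, Real.cos (Real.pi * ((m:ℝ)-(m':ℝ)) * (u:ℝ) / M)) = (1-(-1:ℝ)^j)/2 := by
      rcases le_or_gt m'.val m.val with h | h
      · refine ⟨m.val - m'.val, by omega, by have := m.isLt; omega, ⟨m.val, by omega⟩, ?_⟩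
        have hc : ((m:ℝ)-(m':ℝ)) = ((m.val - m'.val : ℕ) : ℝ) := by
          rw [Nat.cast_sub h]
        rw [Finset.sum_congr rfl (fun u _ => by rw [hc])]
        exact cos_sum_eq M _ hM (by omega) (by have := m.isLt; omega)
      · refine ⟨m'.val - m.val, by omega, by have := m'.isLt; omega, ⟨m'.val, by omega⟩, ?_⟩
        have hc : ∀ u : ℕ, Real.cos (Real.pi * ((m:ℝ)-(m':ℝ)) * (u:ℝ) / M)
            = Real.cos (Real.pi * ((m'.val - m.val : ℕ):ℝ) * (u:ℝ) / M) := by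
          intro u
          rw [Nat.cast_sub (le_of_lt h)]
          rw [show Real.pi * ((m:ℝ)-(m':ℝ)) * (u:ℝ) / M = -(Real.pi * ((m'.val:ℝ)-(m.val:ℝ)) * (u:ℝ) / M) by ring]
          rw [Real.cos_neg]
        rw [Finset.sum_congr rfl (fun u _ => hc u)]
        exact cos_sum_eq M _ hM (by omega) (by have := m'.isLt; omega)
    obtain ⟨j, hj0, hj2, hoddkj, hsum2⟩ := habs
    have hprod2 : (-1:ℝ)^(m.val+m'.val+1) * (-1:ℝ)^j = -1 := by
      rw [← pow_add]; exact Odd.neg_one_pow hoddkj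
    have hab : (-1:ℝ)^(m.val+m'.val+1) + (-1:ℝ)^j = 0 := by
      rcases Nat.even_or_odd (m.val+m'.val+1) with he | ho
      · rw [Even.neg_one_pow he] at hprod2 ⊢; nlinarith
      · rw [Odd.neg_one_pow ho] at hprod2 ⊢; nlinarith
    rw [← Finset.sum_div, Finset.sum_add_distrib, hk1, hsum2, if_neg hmm]
    field_simp
    nlinarith [hab]

lemma re_mul_comm (a b : Quaternion ℝ) : (a*b).re = (b*a).re := by
  simp only [Quaternion.re_mul]; ring

lemma inner_q_mul (q : Quaternion ℝ) (hsq : star q = -q) (x c : Quaternion ℝ) :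
    ⟪q * x, c⟫ = ⟪x, (-q) * c⟫ := by
  rw [Quaternion.inner_def, Quaternion.inner_def, StarMul.star_mul, star_neg, hsq, neg_neg,
    mul_assoc q x (star c), ← mul_assoc x (star c) q]
  exact re_mul_comm _ _

/-- The real inner product of two quaternion matrices. -/
noncomputable def ip {M N : ℕ} (A B : Matrix (Fin M) (Fin N) (Quaternion ℝ)) : ℝ :=
  ∑ m : Fin M, ∑ n : Fin N, ⟪A m n, B m n⟫

lemma sum_swap4 {α β γ δ : Type*} {R : Type*} [AddCommMonoid R] [Fintype α] [Fintype β] [Fintype γ] [Fintype δ]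
    (F : α → β → γ → δ → R) :
    ∑ a : α, ∑ b : β, ∑ c : γ, ∑ d : δ, F a b c d
      = ∑ c : γ, ∑ d : δ, ∑ a : α, ∑ b : β, F a b c d := by
  calc ∑ a : α, ∑ b : β, ∑ c : γ, ∑ d : δ, F a b c d
      = ∑ a : α, ∑ c : γ, ∑ b : β, ∑ d : δ, F a b c d :=
        Finset.sum_congr rfl fun a _ => Finset.sum_comm
    _ = ∑ c : γ, ∑ a : α, ∑ b : β, ∑ d : δ, F a b c d := Finset.sum_comm
    _ = ∑ c : γ, ∑ a : α, ∑ d : δ, ∑ b : β, F a b c d :=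
        Finset.sum_congr rfl fun c _ => Finset.sum_congr rfl fun a _ => Finset.sum_comm
    _ = ∑ c : γ, ∑ d : δ, ∑ a : α, ∑ b : β, F a b c d :=
        Finset.sum_congr rfl fun c _ => Finset.sum_comm

lemma adj (M N : ℕ) (q : Quaternion ℝ) (hsq : star q = -q)
    (X C : Matrix (Fin M) (Fin N) (Quaternion ℝ)) :
    ip (FQDCTL M N q X) C = ip X (IQDCTL M N q C) := by
  unfold ip FQDCTL IQDCTL
  simp only [Matrix.of_apply, sum_inner, inner_sum, real_inner_smul_left, real_inner_smul_right,
    Finset.mul_sum]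
  rw [sum_swap4 (F := fun u v m n => dctAlpha M u * dctAlpha N v *
      (dctKer M N u v m n * ⟪q * X m n, C u v⟫))]
  refine Finset.sum_congr rfl fun m _ => Finset.sum_congr rfl fun n _ =>
    Finset.sum_congr rfl fun u _ => Finset.sum_congr rfl fun v _ => ?_
  rw [inner_q_mul q hsq]

lemma ker_orth (M N : ℕ) (hM : 0 < M) (hN : 0 < N) (m m' : Fin M) (n n' : Fin N) :
    ∑ u : Fin M, ∑ v : Fin N,
      (dctAlpha M u * dctAlpha N v)^2 * (dctKer M N u v m n * dctKer M N u v m' n')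
    = (if m' = m then (1:ℝ) else 0) * (if n' = n then (1:ℝ) else 0) := by
  have : ∀ u : Fin M, ∀ v : Fin N,
      (dctAlpha M u * dctAlpha N v)^2 * (dctKer M N u v m n * dctKer M N u v m' n')
      = ((dctAlpha M u)^2 * (ccos M u m * ccos M u m')) *
        ((dctAlpha N v)^2 * (ccos N v n * ccos N v n')) := by
    intro u v; rw [dctKer_eq, dctKer_eq]; ring
  rw [Finset.sum_congr rfl fun u _ => Finset.sum_congr rfl fun v _ => this u v]
  rw [← Finset.sum_mul_sum]
  rw [ccos_orth M hM m m', ccos_orth N hN n n']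
  congr 1 <;> simp [eq_comm]

lemma inv_comp (M N : ℕ) (hM : 0 < M) (hN : 0 < N) (q : Quaternion ℝ)
    (hqq : ∀ x : Quaternion ℝ, (-q) * (q * x) = x)
    (X : Matrix (Fin M) (Fin N) (Quaternion ℝ)) :
    IQDCTL M N q (FQDCTL M N q X) = X := by
  refine Matrix.ext fun m n => ?_
  show ∑ u : Fin M, ∑ v : Fin N, (dctAlpha M u * dctAlpha N v) •
      ((dctKer M N u v m n) • ((-q) * ((dctAlpha M u * dctAlpha N v) •
        ∑ m' : Fin M, ∑ n' : Fin N, (dctKer M N u v m' n') • (q * X m' n')))) = X m n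
  have step : ∀ u : Fin M, ∀ v : Fin N, (dctAlpha M u * dctAlpha N v) •
      ((dctKer M N u v m n) • ((-q) * ((dctAlpha M u * dctAlpha N v) •
        ∑ m' : Fin M, ∑ n' : Fin N, (dctKer M N u v m' n') • (q * X m' n'))))
      = ∑ m' : Fin M, ∑ n' : Fin N,
          ((dctAlpha M u * dctAlpha N v)^2 * (dctKer M N u v m n * dctKer M N u v m' n')) • X m' n' := by
    intro u v
    simp only [mul_smul_comm, Finset.mul_sum, Finset.smul_sum, hqq, smul_smul]
    refine Finset.sum_congr rfl fun m' _ => Finset.sum_congr rfl fun n' _ => ?_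
    congr 1; ring
  rw [Finset.sum_congr rfl fun u _ => Finset.sum_congr rfl fun v _ => step u v]
  rw [sum_swap4 (F := fun u v m' n' =>
    ((dctAlpha M u * dctAlpha N v)^2 * (dctKer M N u v m n * dctKer M N u v m' n')) • X m' n')]
  have hfact : ∀ m' : Fin M, ∀ n' : Fin N,
      ∑ u : Fin M, ∑ v : Fin N,
        ((dctAlpha M u * dctAlpha N v)^2 * (dctKer M N u v m n * dctKer M N u v m' n')) • X m' n'
      = ((if m' = m then (1:ℝ) else 0) * (if n' = n then (1:ℝ) else 0)) • X m' n' := by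
    intro m' n'
    rw [← ker_orth M N hM hN m m' n n', Finset.sum_smul]
    exact Finset.sum_congr rfl fun u _ => (Finset.sum_smul).symm
  rw [Finset.sum_congr rfl fun m' _ => Finset.sum_congr rfl fun n' _ => hfact m' n']
  simp [ite_smul, mul_ite, Finset.sum_ite_eq']

lemma frob_sq {M N : ℕ} (A : Matrix (Fin M) (Fin N) (Quaternion ℝ)) :
    frob A ^ 2 = ip A A := by
  unfold frob ip
  rw [Real.sq_sqrt (by positivity)]
  simp [real_inner_self_eq_norm_sq]

lemma ip_self_nonneg {M N : ℕ} (A : Matrix (Fin M) (Fin N) (Quaternion ℝ)) : 0 ≤ ip A A :=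
  Finset.sum_nonneg fun m _ => Finset.sum_nonneg fun n _ => real_inner_self_nonneg

lemma ip_comm {M N : ℕ} (A B : Matrix (Fin M) (Fin N) (Quaternion ℝ)) : ip A B = ip B A := by
  unfold ip
  exact Finset.sum_congr rfl fun m _ => Finset.sum_congr rfl fun n _ => real_inner_comm _ _

lemma ip_sub_left {M N : ℕ} (A B C : Matrix (Fin M) (Fin N) (Quaternion ℝ)) :
    ip (A - B) C = ip A C - ip B C := by
  unfold ip
  simp [Matrix.sub_apply, inner_sub_left, Finset.sum_sub_distrib]

lemma ip_sub_right {M N : ℕ} (A B C : Matrix (Fin M) (Fin N) (Quaternion ℝ)) :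
    ip A (B - C) = ip A B - ip A C := by
  unfold ip
  simp [Matrix.sub_apply, inner_sub_right, Finset.sum_sub_distrib]

lemma ip_add_right {M N : ℕ} (A B C : Matrix (Fin M) (Fin N) (Quaternion ℝ)) :
    ip A (B + C) = ip A B + ip A C := by
  unfold ip
  simp [Matrix.add_apply, inner_add_right, Finset.sum_add_distrib]

lemma ip_sub_sub {M N : ℕ} (P Q : Matrix (Fin M) (Fin N) (Quaternion ℝ)) :
    ip (P - Q) (P - Q) = ip P P - 2*ip P Q + ip Q Q := by
  rw [ip_sub_left, ip_sub_right, ip_sub_right, ip_comm Q P]; ring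

lemma ip_smul_right {M N : ℕ} (r : ℝ) (A B : Matrix (Fin M) (Fin N) (Quaternion ℝ)) :
    ip A (r • B) = r * ip A B := by
  unfold ip
  simp [Matrix.smul_apply, real_inner_smul_right, Finset.mul_sum]

end Aux

/-- `X* = ½·(B − μ⁻¹Y + IQDCT^L(W + μ⁻¹Z))` is a global minimizer of
`X ↦ ‖X + μ⁻¹Y − B‖_F² + ‖W + μ⁻¹Z − FQDCT^L(X)‖_F²`. -/
theorem X_update_is_minimizer (M N : ℕ) (hM : 1 ≤ M) (hN : 1 ≤ N)
    (q : Quaternion ℝ) (hre : q.re = 0) (hq : q ^ 2 = -1)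
    (B Y W Z : Matrix (Fin M) (Fin N) (Quaternion ℝ)) (μ : ℝ) (hμ : 0 < μ)
    (f : Matrix (Fin M) (Fin N) (Quaternion ℝ) → ℝ)
    (hf : ∀ X, f X = frob (X + (1 / μ) • Y - B) ^ 2 +
                    frob (W + (1 / μ) • Z - FQDCTL M N q X) ^ 2)
    (Xstar : Matrix (Fin M) (Fin N) (Quaternion ℝ))
    (hXstar : Xstar = (1 / 2 : ℝ) •
        (B - (1 / μ) • Y + IQDCTL M N q (W + (1 / μ) • Z))) :
    ∀ X : Matrix (Fin M) (Fin N) (Quaternion ℝ), f Xstar ≤ f X := by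
  have hsq : star q = -q := by ext <;> simp [hre]
  have hqq : ∀ x : Quaternion ℝ, (-q) * (q * x) = x := fun x => by
    rw [neg_mul, ← mul_assoc, ← pow_two, hq, neg_mul, neg_neg, one_mul]
  set A := B - (1 / μ) • Y with hA
  set Cc := W + (1 / μ) • Z with hCc
  set D := IQDCTL M N q Cc with hD
  have hiso : ∀ X', ip (FQDCTL M N q X') (FQDCTL M N q X') = ip X' X' := fun X' => by
    rw [adj M N q hsq, inv_comp M N hM hN q hqq]
  have hadj : ∀ X', ip (FQDCTL M N q X') Cc = ip X' D := fun X' => adj M N q hsq X' Cc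
  have hfX : ∀ X', f X' = 2*ip X' X' - 2*ip X' A - 2*ip X' D + ip A A + ip Cc Cc := by
    intro X'
    rw [hf X']
    have e1 : X' + (1 / μ) • Y - B = X' - A := by rw [hA]; abel
    rw [e1, frob_sq, frob_sq, ip_sub_sub X' A, ip_sub_sub Cc (FQDCTL M N q X')]
    rw [hiso X', ip_comm Cc (FQDCTL M N q X'), hadj X']
    ring
  have hXs : Xstar = (1/2 : ℝ) • (A + D) := hXstar
  intro X
  rw [hfX X, hfX Xstar]
  have hSS : ip Xstar Xstar = (1/2) * ((ip Xstar A) + (ip Xstar D)) := by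
    nth_rewrite 2 [hXs]
    rw [ip_smul_right, ip_add_right]
  have hSA : ip Xstar A = (1/2) * (ip A A + ip A D) := by
    rw [ip_comm, hXs, ip_smul_right, ip_add_right]
  have hSD : ip Xstar D = (1/2) * (ip A D + ip D D) := by
    rw [ip_comm, hXs, ip_smul_right, ip_add_right, ip_comm D A]
  have hXS : ip X Xstar = (1/2) * (ip X A + ip X D) := by
    rw [hXs, ip_smul_right, ip_add_right]
  have hpos : 0 ≤ ip (X - Xstar) (X - Xstar) := ip_self_nonneg _
  rw [ip_sub_left, ip_sub_right, ip_sub_right, ip_comm Xstar X] at hpos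
  linarith
end

section
/- Let X ∈ ℍ^{M×N}, let L ∈ ℍ^{M×r} satisfy LᴴL = I_r, and let R ∈ ℍ^{r×N} satisfy RRᴴ = I_r. Define D̃ = Lᴴ X Rᴴ ∈ ℍ^{r×r}. Then for every D ∈ ℍ^{r×r}, ‖X − L D R‖_F² = ‖X − L D̃ R‖_F² + ‖D − D̃‖_F². -/
/-!
Equip quaternion matrices with the real inner product `⟪A, B⟫ = ∑ᵢⱼ ⟪Aᵢⱼ, Bᵢⱼ⟫ = Re tr(A Bᴴ)`,
whose norm is the Frobenius norm. Since the real part of a quaternion product is invariant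
under cyclic permutation, `E ↦ L E R` and `P ↦ Lᴴ P Rᴴ` are adjoint, and `LᴴL = I`, `RRᴴ = I`
make the first an isometry with the second as a left inverse. Hence `X − L D̃ R` is
orthogonal to the range of `E ↦ L E R`, and Pythagoras applied to
`X − L D R = (X − L D̃ R) + L (D̃ − D) R` gives the identity.
-/

open Matrix

open scoped Quaternion

namespace Quaternion

open scoped RealInnerProductSpace

theorem re_mul_comm (a b : ℍ[ℝ]) : (a * b).re = (b * a).re := by
  simp only [re_mul]
  ring

theorem inner_mul_left_eq (a b c : ℍ[ℝ]) : ⟪a * b, c⟫ = ⟪b, star a * c⟫ := by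
  rw [inner_def, inner_def, star_mul, star_star, mul_assoc, re_mul_comm, mul_assoc]

theorem inner_mul_right_eq (a b c : ℍ[ℝ]) : ⟪a * b, c⟫ = ⟪a, c * star b⟫ := by
  rw [inner_def, inner_def, star_mul, star_star, mul_assoc]

end Quaternion

namespace Matrix

open scoped RealInnerProductSpace

variable {m n k : Type*} [Fintype m] [Fintype n] [Fintype k]

theorem conjTranspose_mul_mul_mul_conjTranspose [DecidableEq k] {L : Matrix m k ℍ[ℝ]}
    {R : Matrix k n ℍ[ℝ]} (hL : Lᴴ * L = 1) (hR : R * Rᴴ = 1) (E : Matrix k k ℍ[ℝ]) :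
    Lᴴ * (L * E * R) * Rᴴ = E := by
  rw [Matrix.mul_assoc, Matrix.mul_assoc, hR, Matrix.mul_one, ← Matrix.mul_assoc, hL,
    Matrix.one_mul]

noncomputable def frobInner (A B : Matrix m n ℍ[ℝ]) : ℝ :=
  ∑ i, ∑ j, ⟪A i j, B i j⟫

theorem frobInner_comm (A B : Matrix m n ℍ[ℝ]) : frobInner A B = frobInner B A := by
  simp only [frobInner, real_inner_comm]

theorem frobInner_add_left (A B C : Matrix m n ℍ[ℝ]) :
    frobInner (A + B) C = frobInner A C + frobInner B C := by
  simp only [frobInner, add_apply, inner_add_left, Finset.sum_add_distrib]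

theorem frobInner_zero_right (A : Matrix m n ℍ[ℝ]) : frobInner A 0 = 0 := by
  simp [frobInner]

theorem frobInner_mul_left (A : Matrix m k ℍ[ℝ]) (B : Matrix k n ℍ[ℝ]) (C : Matrix m n ℍ[ℝ]) :
    frobInner (A * B) C = frobInner B (Aᴴ * C) := by
  simp only [frobInner, mul_apply, conjTranspose_apply, sum_inner, inner_sum,
    Quaternion.inner_mul_left_eq]
  rw [Finset.sum_comm_cycle]
  exact Finset.sum_congr rfl fun _ _ => Finset.sum_comm

theorem frobInner_mul_right (A : Matrix m k ℍ[ℝ]) (B : Matrix k n ℍ[ℝ]) (C : Matrix m n ℍ[ℝ]) :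
    frobInner (A * B) C = frobInner A (C * Bᴴ) := by
  simp only [frobInner, mul_apply, conjTranspose_apply, sum_inner, inner_sum,
    Quaternion.inner_mul_right_eq]
  exact Finset.sum_congr rfl fun _ _ => Finset.sum_comm

theorem frobInner_mul_mul (L : Matrix m k ℍ[ℝ]) (E : Matrix k k ℍ[ℝ]) (R : Matrix k n ℍ[ℝ])
    (P : Matrix m n ℍ[ℝ]) : frobInner (L * E * R) P = frobInner E (Lᴴ * P * Rᴴ) := by
  rw [frobInner_mul_right, frobInner_mul_left, Matrix.mul_assoc]

end Matrix

theorem frob_sq_eq_frobInner {M N : ℕ} (A : Matrix (Fin M) (Fin N) ℍ[ℝ]) :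
    frob A ^ 2 = frobInner A A := by
  rw [frob, Real.sq_sqrt (by positivity)]
  simp only [frobInner, real_inner_self_eq_norm_sq]

theorem frob_add_sq_of_frobInner_eq_zero {M N : ℕ} {A B : Matrix (Fin M) (Fin N) ℍ[ℝ]}
    (h : frobInner A B = 0) : frob (A + B) ^ 2 = frob A ^ 2 + frob B ^ 2 := by
  simp only [frob_sq_eq_frobInner, frobInner_add_left, frobInner_comm _ (A + B)]
  rw [frobInner_comm B A, h]
  ring

theorem frob_neg {M N : ℕ} (A : Matrix (Fin M) (Fin N) ℍ[ℝ]) : frob (-A) = frob A := by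
  simp [frob]

theorem frob_mul_mul_sq {M N r : ℕ} {L : Matrix (Fin M) (Fin r) ℍ[ℝ]}
    {R : Matrix (Fin r) (Fin N) ℍ[ℝ]} (hL : Lᴴ * L = 1) (hR : R * Rᴴ = 1)
    (E : Matrix (Fin r) (Fin r) ℍ[ℝ]) : frob (L * E * R) ^ 2 = frob E ^ 2 := by
  rw [frob_sq_eq_frobInner, frobInner_mul_mul, conjTranspose_mul_mul_mul_conjTranspose hL hR,
    frob_sq_eq_frobInner]

/-- Pythagorean identity for the middle-factor fit:
if `LᴴL = I_r` and `RRᴴ = I_r`, then with `D̃ = Lᴴ X Rᴴ`,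
`‖X − L D R‖_F² = ‖X − L D̃ R‖_F² + ‖D − D̃‖_F²` for every `D`. -/
theorem middle_factor_pythagoras (M N r : ℕ)
    (X : Matrix (Fin M) (Fin N) (Quaternion ℝ))
    (L : Matrix (Fin M) (Fin r) (Quaternion ℝ))
    (R : Matrix (Fin r) (Fin N) (Quaternion ℝ))
    (hL : Lᴴ * L = 1) (hR : R * Rᴴ = 1)
    (D : Matrix (Fin r) (Fin r) (Quaternion ℝ)) :
    frob (X - L * D * R) ^ 2 =
      frob (X - L * (Lᴴ * X * Rᴴ) * R) ^ 2 + frob (D - Lᴴ * X * Rᴴ) ^ 2 := by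
  set D' := Lᴴ * X * Rᴴ
  have hsplit : X - L * D * R = (X - L * D' * R) + L * (D' - D) * R := by
    rw [Matrix.mul_sub, Matrix.sub_mul]
    abel
  have horth : frobInner (X - L * D' * R) (L * (D' - D) * R) = 0 := by
    rw [frobInner_comm, frobInner_mul_mul, Matrix.mul_sub, Matrix.sub_mul,
      conjTranspose_mul_mul_mul_conjTranspose hL hR, sub_self, frobInner_zero_right]
  rw [hsplit, frob_add_sq_of_frobInner_eq_zero horth, frob_mul_mul_sq hL hR, ← neg_sub D,
    frob_neg]
end
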